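/- arXiv:1602.08828 — 7 statements merged into one kernel-verified Lean document; each statement's English description precedes it below -/
import Mathlib

section
/- Let P and Q be orthogonal projections onto subspaces T and S respectively of a finite-dimensional Hilbert space, with PQP ≥ (1-δ)P for some 0 ≤ δ < 1. Then for every unit vector t ∈ T there exists s ∈ S such that P s = t and ‖s‖ ≤ 1/(1-δ). -/
/-!
Write `P`, `Q` for the projections onto `T`, `S`. For `u ∈ T` one has
`re ⟪P (Q u), u⟫ = ‖Q u‖ ^ 2`, so viability gives
`(1 - δ) ‖u‖ ^ 2 ≤ re ⟪P (Q u), u⟫ ≤ ‖P (Q u)‖ ‖u‖`. Hence the compression `u ↦ P (Q u)` of `Q` to `T` is injective, so (as `T` is finite-dimensional)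
bijective; if `P (Q u) = t` with `‖t‖ = 1`, then `s = Q u` satisfies
`‖s‖ ≤ ‖u‖ ≤ 1 / (1 - δ)`.
-/

noncomputable section

open RCLike
open scoped InnerProductSpace

/-- The orthogonal projection onto a submodule, as a continuous linear map `E →L[ℂ] E`. -/
def projCLM {E : Type*} [NormedAddCommGroup E] [InnerProductSpace ℂ E] [FiniteDimensional ℂ E]
    (K : Submodule ℂ E) : E →L[ℂ] E :=
  K.subtypeL.comp K.orthogonalProjectionOnto

theorem projCLM_eq_starProjection {E : Type*} [NormedAddCommGroup E] [InnerProductSpace ℂ E]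
    [FiniteDimensional ℂ E] (K : Submodule ℂ E) : projCLM K = K.starProjection :=
  rfl

namespace Submodule

variable {𝕜 E : Type*} [RCLike 𝕜] [NormedAddCommGroup E] [InnerProductSpace 𝕜 E]
  (K L : Submodule 𝕜 E) [K.HasOrthogonalProjection] [L.HasOrthogonalProjection]

theorem re_inner_starProjection_starProjection_of_mem {u : E} (hu : u ∈ K) :
    re ⟪K.starProjection (L.starProjection u), u⟫_𝕜 = ‖L.starProjection u‖ ^ 2 := by
  rw [inner_starProjection_left_eq_right, starProjection_eq_self_iff.mpr hu,
    re_inner_starProjection_eq_normSq, starProjection_apply, norm_coe]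

theorem mul_norm_sq_le_norm_starProjection_sq_of_isPositive {c : ℝ}
    (h : (K.starProjection ∘L L.starProjection ∘L K.starProjection
      - (c : 𝕜) • K.starProjection).IsPositive) {u : E} (hu : u ∈ K) :
    c * ‖u‖ ^ 2 ≤ ‖L.starProjection u‖ ^ 2 := by
  have hpos := h.re_inner_nonneg_left u
  simp only [sub_apply, smul_apply, ContinuousLinearMap.comp_apply,
    starProjection_eq_self_iff.mpr hu, inner_sub_left, inner_smul_left, conj_ofReal, map_sub, re_ofReal_mul, inner_self_eq_norm_sq] at hpos
  rw [re_inner_starProjection_starProjection_of_mem K L hu] at hpos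
  linarith

theorem mul_norm_le_norm_starProjection_starProjection {c : ℝ} {u : E} (hu : u ∈ K)
    (hc : c * ‖u‖ ^ 2 ≤ ‖L.starProjection u‖ ^ 2) :
    c * ‖u‖ ≤ ‖K.starProjection (L.starProjection u)‖ := by
  rcases (norm_nonneg u).eq_or_lt with hu0 | hu0
  · rw [← hu0, mul_zero]
    exact norm_nonneg _
  have : c * ‖u‖ * ‖u‖ ≤ ‖K.starProjection (L.starProjection u)‖ * ‖u‖ :=
    calc c * ‖u‖ * ‖u‖ = c * ‖u‖ ^ 2 := by ring
      _ ≤ ‖L.starProjection u‖ ^ 2 := hc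
      _ = re ⟪K.starProjection (L.starProjection u), u⟫_𝕜 :=
        (re_inner_starProjection_starProjection_of_mem K L hu).symm
      _ ≤ ‖K.starProjection (L.starProjection u)‖ * ‖u‖ := re_inner_le_norm _ _
  exact le_of_mul_le_mul_right this hu0

theorem exists_mem_starProjection_starProjection_eq [FiniteDimensional 𝕜 K] {c : ℝ} (hc : 0 < c)
    (hK : ∀ u ∈ K, c * ‖u‖ ^ 2 ≤ ‖L.starProjection u‖ ^ 2) {t : E} (ht : t ∈ K) :
    ∃ u ∈ K, K.starProjection (L.starProjection u) = t := by
  let B : K →ₗ[𝕜] K := K.orthogonalProjectionOnto ∘L L.starProjection ∘L K.subtypeL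
  have hB : Function.Injective B := by
    rw [← LinearMap.ker_eq_bot, LinearMap.ker_eq_bot']
    intro u hu
    have hBu : K.starProjection (L.starProjection u) = 0 := congrArg Subtype.val hu
    have := mul_norm_le_norm_starProjection_starProjection K L u.2 (hK u u.2)
    rw [hBu, norm_zero] at this
    exact norm_eq_zero.mp (le_antisymm (nonpos_of_mul_nonpos_right this hc) (norm_nonneg _))
  obtain ⟨u, hu⟩ := LinearMap.injective_iff_surjective.mp hB ⟨t, ht⟩
  exact ⟨u, u.2, congrArg Subtype.val hu⟩

end Submodule

theorem exists_preimage_of_viable_general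
    {E : Type*} [NormedAddCommGroup E] [InnerProductSpace ℂ E] [FiniteDimensional ℂ E]
    (T S : Submodule ℂ E) (δ : ℝ) (hδ1 : δ < 1)
    (hviable : ((projCLM T).comp ((projCLM S).comp (projCLM T))
        - ((1 - δ : ℝ) : ℂ) • projCLM T).IsPositive) :
    ∀ t ∈ T, ‖t‖ = 1 → ∃ s ∈ S, projCLM T s = t ∧ ‖s‖ ≤ 1 / (1 - δ) := by
  intro t ht hnt
  simp only [projCLM_eq_starProjection] at hviable ⊢
  have hδ : 0 < 1 - δ := by linarith
  have hT := fun u (hu : u ∈ T) ↦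
    T.mul_norm_sq_le_norm_starProjection_sq_of_isPositive S (c := 1 - δ) hviable hu
  obtain ⟨u, hu, hut⟩ := T.exists_mem_starProjection_starProjection_eq S hδ hT ht
  have hnu := T.mul_norm_le_norm_starProjection_starProjection S hu (hT u hu)
  rw [hut, hnt] at hnu
  refine ⟨S.starProjection u, S.starProjection_apply_mem u, hut, ?_⟩
  calc ‖S.starProjection u‖ ≤ ‖u‖ := S.norm_starProjection_apply_le u
    _ ≤ 1 / (1 - δ) := by rw [le_div_iff₀ hδ]; linarith

theorem exists_preimage_of_viable
    {E : Type*} [NormedAddCommGroup E] [InnerProductSpace ℂ E] [FiniteDimensional ℂ E]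
    (T S : Submodule ℂ E) (δ : ℝ) (hδ0 : 0 ≤ δ) (hδ1 : δ < 1)
    (hviable : ((projCLM T).comp ((projCLM S).comp (projCLM T))
        - ((1 - δ : ℝ) : ℂ) • projCLM T).IsPositive) :
    ∀ t ∈ T, ‖t‖ = 1 → ∃ s ∈ S, projCLM T s = t ∧ ‖s‖ ≤ 1 / (1 - δ) :=
  exists_preimage_of_viable_general T S δ hδ1 hviable
end
end

section
/- Let P and Q be commuting orthogonal projections and R an orthogonal projection such that RPR ≥ (1-δ₁)R and RQR ≥ (1-δ₂)R. Then R(PQ)R ≥ (1-δ₁-δ₂)R. -/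
/-!
Since `P` and `Q` commute, `(1 - P)(1 - Q)` is again an orthogonal projection, hence positive, and
so is its compression `R (1 - P)(1 - Q) R`. Expanding with `R² = R` gives
`RPQR ≥ RPR + RQR - R ≥ (1 - δ₁) R + (1 - δ₂) R - R`.
-/

namespace IsStarProjection

variable {A : Type*} [Ring A] [PartialOrder A] [StarRing A] [StarOrderedRing A] {p q r : A}

theorem conj_add_conj_sub_le_conj_mul (hp : IsStarProjection p) (hq : IsStarProjection q)
    (hr : IsStarProjection r) (hpq : Commute p q) :
    r * p * r + r * q * r - r ≤ r * (p * q) * r := by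
  have hcomm : Commute (1 - p) (1 - q) :=
    (Commute.one_left _).sub_left ((Commute.one_right p).sub_right hpq)
  have hnonneg : 0 ≤ r * ((1 - p) * (1 - q)) * r :=
    hr.isSelfAdjoint.conjugate_nonneg (hp.one_sub.mul hq.one_sub hcomm).nonneg
  have hexpand :
      r * ((1 - p) * (1 - q)) * r = r * (p * q) * r - (r * p * r + r * q * r - r) :=
    calc r * ((1 - p) * (1 - q)) * r = r * r - r * p * r - r * q * r + r * (p * q) * r := by
          noncomm_ring
      _ = _ := by rw [hr.isIdempotentElem.eq]; abel
  rwa [hexpand, sub_nonneg] at hnonneg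

theorem le_conj_mul_of_le_conj {a b : A} (hp : IsStarProjection p) (hq : IsStarProjection q)
    (hr : IsStarProjection r) (hpq : Commute p q) (ha : a ≤ r * p * r) (hb : b ≤ r * q * r) :
    a + b - r ≤ r * (p * q) * r :=
  (sub_le_sub_right (add_le_add ha hb) r).trans (hp.conj_add_conj_sub_le_conj_mul hq hr hpq)

end IsStarProjection

theorem commuting_projections_product_ineq
    {E : Type*} [NormedAddCommGroup E] [InnerProductSpace ℂ E] [FiniteDimensional ℂ E]
    (P Q R : E →L[ℂ] E)
    (hP : IsSelfAdjoint P) (hP2 : P.comp P = P)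
    (hQ : IsSelfAdjoint Q) (hQ2 : Q.comp Q = Q)
    (hR : IsSelfAdjoint R) (hR2 : R.comp R = R)
    (hPQ : Commute P Q)
    (δ₁ δ₂ : ℝ)
    (h₁ : (R.comp (P.comp R) - ((1 - δ₁ : ℝ) : ℂ) • R).IsPositive)
    (h₂ : (R.comp (Q.comp R) - ((1 - δ₂ : ℝ) : ℂ) • R).IsPositive) :
    (R.comp ((P.comp Q).comp R) - ((1 - δ₁ - δ₂ : ℝ) : ℂ) • R).IsPositive := by
  have hscalar : ((1 - δ₁ - δ₂ : ℝ) : ℂ) • R =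
      ((1 - δ₁ : ℝ) : ℂ) • R + ((1 - δ₂ : ℝ) : ℂ) • R - R := by
    push_cast
    module
  rw [← ContinuousLinearMap.le_def, hscalar]
  exact IsStarProjection.le_conj_mul_of_le_conj ⟨hP2, hP⟩ ⟨hQ2, hQ⟩ ⟨hR2, hR⟩ hPQ h₁ h₂
end

section
/- Let T_k denote the k-th Chebyshev polynomial of the first kind. For every real x with |x| ≥ 1 and every positive integer k, |T_k(x)| ≥ ½ exp(2k √((|x|-1)/(|x|+1))). -/
/-!
Write `|x| = cosh t` with `t ≥ 0`. Then `|T_k(x)| = cosh (k t) ≥ exp (k t) / 2`, and with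
`s = √((|x| - 1) / (|x| + 1))` one has `cosh (log ((1 + s) / (1 - s))) = |x|`, so
`t = log (1 + s) - log (1 - s)`, which is at least `2 s`: this difference is the power series
`2 (s + s³/3 + s⁵/5 + ⋯)`, whose terms are nonnegative.
-/

noncomputable section

open Polynomial Real

namespace Polynomial.Chebyshev

theorem abs_eval_T_abs {R : Type*} [CommRing R] [LinearOrder R] [IsStrictOrderedRing R]
    (n : ℤ) (x : R) : |(T R n).eval (|x|)| = |(T R n).eval x| := by
  rcases abs_choice x with h | h <;> rw [h]
  simp [T_eval_neg, abs_mul]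

theorem T_real_eval_eq_cosh_mul_arcosh (n : ℤ) {x : ℝ} (hx : 1 ≤ x) :
    (T ℝ n).eval x = cosh (n * arcosh x) := by
  rw [← T_real_cosh, cosh_arcosh hx]

end Polynomial.Chebyshev

theorem exp_div_two_le_cosh (x : ℝ) : exp x / 2 ≤ cosh x := by
  rw [cosh_eq]
  linarith [exp_pos (-x)]

theorem two_mul_le_log_one_add_sub_log_one_sub {s : ℝ} (h0 : 0 ≤ s) (h1 : s < 1) :
    2 * s ≤ log (1 + s) - log (1 - s) := by
  have hs := hasSum_log_sub_log_of_abs_lt_one (abs_lt.2 ⟨by linarith, h1⟩)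
  simpa using le_hasSum hs 0 fun j _ => by positivity

theorem cosh_log_one_add_div_one_sub {s : ℝ} (h0 : 0 ≤ s) (h1 : s < 1) :
    cosh (log ((1 + s) / (1 - s))) = (1 + s ^ 2) / (1 - s ^ 2) := by
  have : 0 < 1 - s := by linarith
  have : 0 < 1 + s := by linarith
  rw [cosh_eq, exp_neg, exp_log (by positivity), inv_div,
    show 1 - s ^ 2 = (1 - s) * (1 + s) by ring]
  field_simp
  ring

theorem two_mul_le_arcosh_one_add_sq_div_one_sub_sq {s : ℝ} (h0 : 0 ≤ s) (h1 : s < 1) :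
    2 * s ≤ arcosh ((1 + s ^ 2) / (1 - s ^ 2)) := by
  have : 0 < 1 - s := by linarith
  rw [← cosh_log_one_add_div_one_sub h0 h1, arcosh_cosh, log_div (by linarith) this.ne']
  · exact two_mul_le_log_one_add_sub_log_one_sub h0 h1
  · exact log_nonneg ((one_le_div this).2 (by linarith))

theorem one_add_sq_div_one_sub_sq_of_sq_eq {a s : ℝ} (ha : 1 ≤ a)
    (hs : s ^ 2 = (a - 1) / (a + 1)) : (1 + s ^ 2) / (1 - s ^ 2) = a := by
  have : a + 1 ≠ 0 := by linarith
  rw [hs]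
  field_simp
  ring

theorem two_mul_sqrt_le_arcosh {a : ℝ} (ha : 1 ≤ a) :
    2 * √((a - 1) / (a + 1)) ≤ arcosh a := by
  set s := √((a - 1) / (a + 1))
  have hq : 0 ≤ (a - 1) / (a + 1) := div_nonneg (by linarith) (by linarith)
  have hs1 : s < 1 := by
    rw [sqrt_lt' one_pos, one_pow, div_lt_one (by linarith)]
    linarith
  calc 2 * s ≤ arcosh ((1 + s ^ 2) / (1 - s ^ 2)) :=
        two_mul_le_arcosh_one_add_sq_div_one_sub_sq (sqrt_nonneg _) hs1
    _ = arcosh a := by rw [one_add_sq_div_one_sub_sq_of_sq_eq ha (sq_sqrt hq)]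

theorem chebyshev_T_abs_ge_of_one_le_abs_general (k : ℕ) (x : ℝ) (hx : 1 ≤ |x|) :
    (1 / 2) * Real.exp (2 * k * Real.sqrt ((|x| - 1) / (|x| + 1))) ≤
      |(Polynomial.Chebyshev.T ℝ (k : ℤ)).eval x| := by
  have key : 2 * k * √((|x| - 1) / (|x| + 1)) ≤ k * arcosh |x| := by
    rw [mul_comm 2 (k : ℝ), mul_assoc]
    exact mul_le_mul_of_nonneg_left (two_mul_sqrt_le_arcosh hx) k.cast_nonneg
  rw [← Chebyshev.abs_eval_T_abs, Chebyshev.T_real_eval_eq_cosh_mul_arcosh _ hx,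
    abs_of_pos (cosh_pos _), Int.cast_natCast, one_div_mul_eq_div]
  calc exp (2 * k * √((|x| - 1) / (|x| + 1))) / 2 ≤ exp (k * arcosh |x|) / 2 := by gcongr
    _ ≤ cosh (k * arcosh |x|) := exp_div_two_le_cosh _

theorem chebyshev_T_abs_ge_of_one_le_abs (k : ℕ) (hk : 1 ≤ k) (x : ℝ) (hx : 1 ≤ |x|) :
    (1 / 2) * Real.exp (2 * k * Real.sqrt ((|x| - 1) / (|x| + 1))) ≤
      |(Polynomial.Chebyshev.T ℝ (k : ℤ)).eval x| :=
  chebyshev_T_abs_ge_of_one_le_abs_general k x hx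
end
end

section
/- Let t ≥ 1 and t' ≥ 1 be integers, and define f_t(x) = 1 - e^{-x/t} and h_{t',t}(x) = t·(f_t(x) + f_t(x)²/2 + ⋯ + f_t(x)^{t'}/t'). Then for every real x ≥ 0, |h_{t',t}(x) - x| ≤ (t/t')·(x/t)^{t'}. -/
noncomputable section

open Real Finset

/-- `f_t(x) = 1 - e^{-x/t}`. -/
def softF (t : ℝ) (x : ℝ) : ℝ := 1 - Real.exp (-x / t)

/-- `h_{t',t}(x) = t ⬝ ∑_{j=1}^{t'} f_t(x)^j / j`. -/
def softH (t' : ℕ) (t : ℝ) (x : ℝ) : ℝ :=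
  t * ∑ j ∈ Finset.Icc 1 t', softF t x ^ j / j

/-!
Since `t · f_t' = 1 - f_t`, the derivative of `h_{t',t}` is the telescoping product
`(1 - f_t) · ∑_{i<t'} f_tⁱ = 1 - f_t^{t'}`. Hence `x - h_{t',t}(x) = ∫₀ˣ f_t(s)^{t'} ds ≥ 0`, and
`0 ≤ f_t(s) ≤ min(1, s/t)` bounds the integrand by `(s/t)^{t'-1}`, whose integral is
`(t/t') (x/t)^{t'}`.
-/

lemma softF_lt_one (t x : ℝ) : softF t x < 1 := by
  simpa [softF] using Real.exp_pos (-x / t)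

lemma softF_nonneg {t x : ℝ} (ht : 0 ≤ t) (hx : 0 ≤ x) : 0 ≤ softF t x := by
  have : Real.exp (-x / t) ≤ 1 :=
    Real.exp_le_one_iff.mpr (by rw [neg_div]; linarith [div_nonneg hx ht])
  simpa [softF] using this

lemma softF_le_div (t x : ℝ) : softF t x ≤ x / t := by
  have := Real.add_one_le_exp (-x / t)
  rw [softF, neg_div] at *
  linarith

lemma softF_zero (t : ℝ) : softF t 0 = 0 := by
  simp [softF]

lemma continuous_softF (t : ℝ) : Continuous (softF t) := by
  unfold softF
  fun_prop

lemma hasDerivAt_softF {t : ℝ} (ht : t ≠ 0) (x : ℝ) :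
    HasDerivAt (softF t) ((1 - softF t x) / t) x := by
  refine (((hasDerivAt_neg x).div_const t).exp.const_sub 1).congr_deriv ?_
  simp only [softF, sub_sub_cancel]
  field_simp

lemma hasDerivAt_sum_Icc_pow_div {g : ℝ → ℝ} {g' x : ℝ} (hg : HasDerivAt g g' x) (n : ℕ) :
    HasDerivAt (fun y => ∑ j ∈ Icc 1 n, g y ^ j / j) (g' * ∑ i ∈ range n, g x ^ i) x := by
  have hsum := HasDerivAt.fun_sum fun j (_ : j ∈ Icc 1 n) => (hg.pow j).div_const (j : ℝ)
  refine hsum.congr_deriv ?_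
  rw [mul_sum, ← Ico_add_one_right_eq_Icc, sum_Ico_eq_sum_range]
  refine sum_congr rfl fun i _ => ?_
  rw [add_tsub_cancel_left]
  push_cast
  field_simp

lemma hasDerivAt_softH {t : ℝ} (ht : t ≠ 0) (n : ℕ) (x : ℝ) :
    HasDerivAt (softH n t) (1 - softF t x ^ n) x := by
  refine ((hasDerivAt_sum_Icc_pow_div (hasDerivAt_softF ht x) n).const_mul t).congr_deriv ?_
  rw [← mul_neg_geom_sum]
  field_simp

lemma softH_zero_right (n : ℕ) (t : ℝ) : softH n t 0 = 0 := by
  rw [softH, softF_zero, sum_eq_zero, mul_zero]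
  intro j hj
  rw [zero_pow (by grind), zero_div]

lemma integral_softF_pow {t : ℝ} (ht : t ≠ 0) (n : ℕ) (x : ℝ) :
    ∫ s in (0 : ℝ)..x, softF t s ^ n = x - softH n t x := by
  have hderiv (s : ℝ) : HasDerivAt (fun y => y - softH n t y) (softF t s ^ n) s :=
    ((hasDerivAt_id s).sub (hasDerivAt_softH ht n s)).congr_deriv (by ring)
  rw [intervalIntegral.integral_eq_sub_of_hasDerivAt (fun s _ => hderiv s)
    (((continuous_softF t).pow n).intervalIntegrable 0 x), softH_zero_right, sub_zero, sub_zero]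

lemma pow_le_pow_pred_of_le {y u : ℝ} (hy₀ : 0 ≤ y) (hy₁ : y ≤ 1) (hyu : y ≤ u) (n : ℕ) :
    y ^ n ≤ u ^ (n - 1) :=
  (pow_le_pow_of_le_one hy₀ hy₁ (n.sub_le 1)).trans (pow_le_pow_left₀ hy₀ hyu _)

lemma softF_pow_le {t s : ℝ} (ht : 0 ≤ t) (hs : 0 ≤ s) (n : ℕ) :
    softF t s ^ n ≤ (s / t) ^ (n - 1) :=
  pow_le_pow_pred_of_le (softF_nonneg ht hs) (softF_lt_one t s).le (softF_le_div t s) n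

lemma integral_div_pow_pred {t : ℝ} (ht : t ≠ 0) {n : ℕ} (hn : n ≠ 0) (x : ℝ) :
    ∫ s in (0 : ℝ)..x, (s / t) ^ (n - 1) = t / n * (x / t) ^ n := by
  have hn₁ : 1 ≤ n := Nat.one_le_iff_ne_zero.mpr hn
  rw [intervalIntegral.integral_comp_div (· ^ (n - 1)) ht, integral_pow, Nat.sub_add_cancel hn₁,
    Nat.cast_sub hn₁, zero_div, zero_pow hn, smul_eq_mul]
  push_cast
  ring

theorem softH_approx (t t' : ℕ) (ht : 1 ≤ t) (ht' : 1 ≤ t') (x : ℝ) (hx : 0 ≤ x) :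
    |softH t' t x - x| ≤ (t / t') * (x / t) ^ t' := by
  have ht₀ : (t : ℝ) ≠ 0 := Nat.cast_ne_zero.mpr (by omega)
  have hnonneg : 0 ≤ x - softH t' t x := by
    rw [← integral_softF_pow ht₀]
    exact intervalIntegral.integral_nonneg hx fun s hs =>
      pow_nonneg (softF_nonneg t.cast_nonneg hs.1) t'
  rw [abs_sub_comm, abs_of_nonneg hnonneg, ← integral_softF_pow ht₀,
    ← integral_div_pow_pred ht₀ (by omega : t' ≠ 0)]
  exact intervalIntegral.integral_mono_on hx
    (((continuous_softF t).pow t').intervalIntegrable 0 x)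
    ((by fun_prop : Continuous fun s : ℝ => (s / t) ^ (t' - 1)).intervalIntegrable 0 x)
    fun s hs => softF_pow_le t.cast_nonneg hs.1 t'
end
end

section
/- Let h₁, …, h_m be orthogonal projections on a finite-dimensional Hilbert space, each commuting with all but at most g of the others, and H = ∑ h_i. Fix any ordering and let φ = ∏_i (1 - h_i) ψ for a unit vector ψ. If φ ≠ 0, then ‖φ‖² ≤ 1 / (ε_φ/g² + 1), where ε_φ = ⟨φ, Hφ⟩ / ‖φ‖². -/
/-!
Write `φ = (1 - h a₁) ⋯ (1 - h aₘ) ψ` and let `f a = ‖h a xₐ‖`, where `xₐ` is the vector that the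
factor `1 - h a` is applied to. Each factor splits its input orthogonally into `h a xₐ` and its
output, so `‖ψ‖² = ‖φ‖² + ∑ₐ (f a)²`. The projection `h i` kills the output of its own factor, and
moving `h i` out through the factors applied after it costs nothing at a commuting factor (a
contraction) and at most `f a` at a non-commuting one. Hence `‖h i φ‖ ≤ ∑ f a` over the neighbours
`a` of `i` in the non-commutation graph, and Cauchy–Schwarz with double counting over a graph of
degree `≤ g` gives `⟪φ, H φ⟫ = ∑ᵢ ‖h i φ‖² ≤ g² (1 - ‖φ‖²)`, which is the claim rearranged.
-/

noncomputable section

open scoped InnerProductSpace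
open Classical

open Finset RCLike List

section StarProjection

variable {𝕜 E : Type*} [RCLike 𝕜] [NormedAddCommGroup E] [InnerProductSpace 𝕜 E] [CompleteSpace E]
  {p : E →L[𝕜] E}

theorem IsStarProjection.norm_apply_le (hp : IsStarProjection p) (x : E) : ‖p x‖ ≤ ‖x‖ := by
  simpa using p.le_of_opNorm_le hp.norm_le x

theorem IsStarProjection.re_inner_apply_self (hp : IsStarProjection p) (x : E) :
    re ⟪x, p x⟫_𝕜 = ‖p x‖ ^ 2 := by
  have hpp : p (p x) = p x := DFunLike.congr_fun hp.isIdempotentElem.eq x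
  have hsymm : ⟪p x, p x⟫_𝕜 = ⟪x, p (p x)⟫_𝕜 := hp.isSelfAdjoint.isSymmetric x (p x)
  rw [← inner_self_eq_norm_sq (𝕜 := 𝕜), hsymm, hpp]

theorem IsStarProjection.norm_sq_eq_add (hp : IsStarProjection p) (x : E) :
    ‖x‖ ^ 2 = ‖p x‖ ^ 2 + ‖(1 - p) x‖ ^ 2 := by
  rw [← hp.re_inner_apply_self, ← hp.one_sub.re_inner_apply_self, ← map_add, ← inner_add_right,
    sub_apply, add_sub_cancel, one_apply_eq_self, inner_self_eq_norm_sq]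

end StarProjection

namespace List

variable {α : Type*} [DecidableEq α]

def suffixAfter (a : α) (l : List α) : List α := (l.dropWhile (· ≠ a)).tail

@[simp]
theorem suffixAfter_cons_self (a : α) (l : List α) : suffixAfter a (a :: l) = l := by
  simp [suffixAfter]

theorem suffixAfter_cons_of_ne {a b : α} (l : List α) (hab : b ≠ a) :
    suffixAfter a (b :: l) = suffixAfter a l := by
  simp [suffixAfter, hab]

theorem suffixAfter_append_of_mem {a : α} {u : List α} (v : List α) (ha : a ∈ u) :
    suffixAfter a (u ++ v) = suffixAfter a u ++ v := by
  induction u with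
  | nil => simp at ha
  | cons b u ih =>
    by_cases hba : b = a
    · simp [hba]
    · rw [cons_append, suffixAfter_cons_of_ne _ hba, suffixAfter_cons_of_ne _ hba,
        ih (by simpa [Ne.symm hba] using ha)]

end List

def noncommGraph {ι M : Type*} [Mul M] (h : ι → M) : SimpleGraph ι where
  Adj i j := j ≠ i ∧ ¬Commute (h i) (h j)
  symm := ⟨fun _ _ ⟨hne, hc⟩ => ⟨hne.symm, fun hc' => hc hc'.symm⟩⟩
  loopless := ⟨fun _ hii => hii.1 rfl⟩

theorem SimpleGraph.sum_sq_sum_neighborFinset_le {V : Type*} [Fintype V] (G : SimpleGraph V)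
    [DecidableRel G.Adj] {g : ℕ} (hg : ∀ v, G.degree v ≤ g) (f : V → ℝ) :
    ∑ v, (∑ w ∈ G.neighborFinset v, f w) ^ 2 ≤ g ^ 2 * ∑ v, f v ^ 2 := by
  have hswap : ∑ v, ∑ w ∈ G.neighborFinset v, f w ^ 2 = ∑ w, G.degree w * f w ^ 2 := by
    rw [sum_comm' (t' := univ) (s' := fun w => G.neighborFinset w)
      (fun v w => by simp [G.adj_comm])]
    simp [← card_neighborFinset_eq_degree]
  calc ∑ v, (∑ w ∈ G.neighborFinset v, f w) ^ 2
      ≤ ∑ v, (g : ℝ) * ∑ w ∈ G.neighborFinset v, f w ^ 2 := by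
        gcongr with v
        refine sq_sum_le_card_mul_sum_sq.trans ?_
        gcongr
        exact_mod_cast hg v
    _ = g * ∑ w, G.degree w * f w ^ 2 := by rw [← mul_sum, hswap]
    _ ≤ g * ∑ w, g * f w ^ 2 := by gcongr with w; exact_mod_cast hg w
    _ = g ^ 2 * ∑ v, f v ^ 2 := by rw [← mul_sum]; ring

theorem le_one_div_div_div_add_one {n S G : ℝ} (hn : 0 ≤ n) (hn1 : n ≤ 1) (hS : 0 ≤ S)
    (hG : 0 ≤ G) (hSG : S ≤ G * (1 - n)) : n ≤ 1 / (S / n / G + 1) := by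
  rcases hn.eq_or_lt with rfl | hn
  · simp
  rcases hG.eq_or_lt with rfl | hG
  · simpa using hn1
  rw [le_div_iff₀ (by positivity)]
  calc n * (S / n / G + 1) = S / G + n := by field_simp
    _ ≤ 1 - n + n := by gcongr; rwa [div_le_iff₀ hG, mul_comm]
    _ = 1 := by ring

section Detectability

variable {𝕜 E ι : Type*} [RCLike 𝕜] [NormedAddCommGroup E] [InnerProductSpace 𝕜 E]
  (h : ι → E →L[𝕜] E)

def prodOneSub (l : List ι) : E →L[𝕜] E := (l.map fun i => 1 - h i).prod

theorem prodOneSub_cons_apply (a : ι) (l : List ι) (x : E) :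
    prodOneSub h (a :: l) x = (1 - h a) (prodOneSub h l x) := by
  simp [prodOneSub, mul_apply_eq_comp]

theorem prodOneSub_append_apply (u v : List ι) (x : E) :
    prodOneSub h (u ++ v) x = prodOneSub h u (prodOneSub h v x) := by
  simp [prodOneSub, mul_apply_eq_comp]

variable {h} [CompleteSpace E] (hh : ∀ i, IsStarProjection (h i))
include hh

theorem norm_prodOneSub_apply_le (l : List ι) (x : E) : ‖prodOneSub h l x‖ ≤ ‖x‖ := by
  induction l with
  | nil => simp [prodOneSub]
  | cons a l ih =>
    rw [prodOneSub_cons_apply]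
    exact ((hh a).one_sub.norm_apply_le _).trans ih

variable [DecidableEq ι]

theorem norm_sq_eq_norm_sq_prodOneSub_apply_add_sum (x : E) :
    ∀ {l : List ι}, l.Nodup → ‖x‖ ^ 2 = ‖prodOneSub h l x‖ ^ 2 +
      ∑ a ∈ l.toFinset, ‖h a (prodOneSub h (suffixAfter a l) x)‖ ^ 2
  | [], _ => by simp [prodOneSub]
  | a :: l, hl => by
    obtain ⟨hal, hl⟩ := nodup_cons.mp hl
    have hsum : ∑ b ∈ l.toFinset, ‖h b (prodOneSub h (suffixAfter b (a :: l)) x)‖ ^ 2 =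
        ∑ b ∈ l.toFinset, ‖h b (prodOneSub h (suffixAfter b l) x)‖ ^ 2 :=
      sum_congr rfl fun b hb => by
        rw [suffixAfter_cons_of_ne _ (ne_of_mem_of_not_mem (mem_toFinset.mp hb) hal).symm]
    rw [toFinset_cons, sum_insert (by simpa using hal), suffixAfter_cons_self, hsum,
      prodOneSub_cons_apply, norm_sq_eq_norm_sq_prodOneSub_apply_add_sum x hl,
      (hh a).norm_sq_eq_add (prodOneSub h l x)]
    ring

theorem norm_apply_prodOneSub_apply_le (i : ι) (x : E) :
    ∀ {w : List ι}, w.Nodup → ‖h i (prodOneSub h w x)‖ ≤ ‖h i x‖ +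
      ∑ b ∈ w.toFinset with ¬Commute (h i) (h b), ‖h b (prodOneSub h (suffixAfter b w) x)‖
  | [], _ => by simp [prodOneSub]
  | b :: w, hw => by
    obtain ⟨hbw, hw⟩ := nodup_cons.mp hw
    have ih := norm_apply_prodOneSub_apply_le i x hw
    have hsum : ∑ c ∈ w.toFinset with ¬Commute (h i) (h c),
          ‖h c (prodOneSub h (suffixAfter c (b :: w)) x)‖ =
        ∑ c ∈ w.toFinset with ¬Commute (h i) (h c), ‖h c (prodOneSub h (suffixAfter c w) x)‖ :=
      sum_congr rfl fun c hc => by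
        rw [suffixAfter_cons_of_ne _
          (ne_of_mem_of_not_mem (mem_toFinset.mp (Finset.mem_filter.mp hc).1) hbw).symm]
    set y := prodOneSub h w x
    rw [toFinset_cons, filter_insert, prodOneSub_cons_apply]
    by_cases hc : Commute (h i) (h b)
    · rw [if_neg (not_not.mpr hc), hsum]
      calc ‖h i ((1 - h b) y)‖ = ‖(1 - h b) (h i y)‖ := by
            rw [← mul_apply_eq_comp, ((Commute.one_right _).sub_right hc).eq, mul_apply_eq_comp]
        _ ≤ ‖h i y‖ := (hh b).one_sub.norm_apply_le _
        _ ≤ _ := ih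
    · rw [if_pos hc, sum_insert (by simp [hbw]), suffixAfter_cons_self, hsum]
      calc ‖h i ((1 - h b) y)‖ = ‖h i y - h i (h b y)‖ := by simp
        _ ≤ ‖h i y‖ + ‖h b y‖ := (norm_sub_le _ _).trans (by gcongr; exact (hh i).norm_apply_le _)
        _ ≤ _ := by linarith

variable [Fintype ι]

theorem norm_apply_prodOneSub_apply_le_sum_neighborFinset {l : List ι} (hl : l.Nodup) {i : ι}
    (hi : i ∈ l) (x : E) :
    ‖h i (prodOneSub h l x)‖ ≤
      ∑ b ∈ (noncommGraph h).neighborFinset i, ‖h b (prodOneSub h (suffixAfter b l) x)‖ := by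
  obtain ⟨u, t, rfl⟩ := append_of_mem hi
  have hiu : i ∉ u := fun hiu => (nodup_cons.mp (nodup_middle.mp hl)).1 (mem_append_left t hiu)
  have hi_zero : h i (prodOneSub h (i :: t) x) = 0 := by
    rw [prodOneSub_cons_apply, ← mul_apply_eq_comp, (hh i).mul_one_sub_self, zero_apply]
  calc ‖h i (prodOneSub h (u ++ i :: t) x)‖
      ≤ ∑ b ∈ u.toFinset with ¬Commute (h i) (h b),
          ‖h b (prodOneSub h (suffixAfter b u) (prodOneSub h (i :: t) x))‖ := by
        simpa [prodOneSub_append_apply, hi_zero] using norm_apply_prodOneSub_apply_le hh i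
          (prodOneSub h (i :: t) x) (hl.sublist (sublist_append_left u _))
    _ = ∑ b ∈ u.toFinset with ¬Commute (h i) (h b),
          ‖h b (prodOneSub h (suffixAfter b (u ++ i :: t)) x)‖ :=
        sum_congr rfl fun b hb => by
          rw [suffixAfter_append_of_mem _ (mem_toFinset.mp (Finset.mem_filter.mp hb).1),
            prodOneSub_append_apply]
    _ ≤ _ := by
        refine sum_le_sum_of_subset_of_nonneg (fun b hb => ?_) fun _ _ _ => norm_nonneg _
        obtain ⟨hbu, hc⟩ := Finset.mem_filter.mp hb
        exact (SimpleGraph.mem_neighborFinset _ _ _).mpr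
          ⟨ne_of_mem_of_not_mem (mem_toFinset.mp hbu) hiu, hc⟩

theorem sum_norm_sq_apply_prodOneSub_apply_le {g : ℕ} (hg : ∀ i, (noncommGraph h).degree i ≤ g)
    {l : List ι} (hl : l.Nodup) (hlmem : ∀ i, i ∈ l) (x : E) :
    ∑ i, ‖h i (prodOneSub h l x)‖ ^ 2 ≤ g ^ 2 * (‖x‖ ^ 2 - ‖prodOneSub h l x‖ ^ 2) := by
  set f := fun b => ‖h b (prodOneSub h (suffixAfter b l) x)‖
  have hloss : ‖x‖ ^ 2 - ‖prodOneSub h l x‖ ^ 2 = ∑ b, f b ^ 2 := by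
    rw [norm_sq_eq_norm_sq_prodOneSub_apply_add_sum hh x hl,
      show l.toFinset = univ from eq_univ_of_forall fun i => mem_toFinset.mpr (hlmem i)]
    ring
  calc ∑ i, ‖h i (prodOneSub h l x)‖ ^ 2
      ≤ ∑ i, (∑ b ∈ (noncommGraph h).neighborFinset i, f b) ^ 2 := by
        gcongr with i
        exact norm_apply_prodOneSub_apply_le_sum_neighborFinset hh hl (hlmem i) x
    _ ≤ g ^ 2 * ∑ b, f b ^ 2 := (noncommGraph h).sum_sq_sum_neighborFinset_le hg f
    _ = _ := by rw [hloss]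

end Detectability

theorem detectability_lemma_general
    {E : Type*} [NormedAddCommGroup E] [InnerProductSpace ℂ E] [FiniteDimensional ℂ E]
    {m : ℕ} (h : Fin m → (E →L[ℂ] E))
    (hproj : ∀ i, IsSelfAdjoint (h i) ∧ (h i).comp (h i) = h i)
    (g : ℕ)
    (hcomm : ∀ i, (Finset.univ.filter fun j => j ≠ i ∧ ¬ Commute (h i) (h j)).card ≤ g)
    (l : List (Fin m)) (hl : l.Nodup) (hlmem : ∀ i, i ∈ l)
    (ψ : E) (hψ : ‖ψ‖ = 1)
    (φ : E) (hφdef : φ = ((l.map fun i => (1 : E →L[ℂ] E) - h i).prod) ψ)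
    (εφ : ℝ) (hε : εφ = (⟪φ, (∑ i, h i) φ⟫_ℂ).re / ‖φ‖ ^ 2) :
    ‖φ‖ ^ 2 ≤ 1 / (εφ / (g : ℝ) ^ 2 + 1) := by
  have hh : ∀ i, IsStarProjection (h i) := fun i => ⟨(hproj i).2, (hproj i).1⟩
  have hdeg : ∀ i, (noncommGraph h).degree i ≤ g := fun i => by
    rw [← SimpleGraph.card_neighborFinset_eq_degree, SimpleGraph.neighborFinset_eq_filter]
    convert hcomm i using 3
    rfl
  have henergy : (⟪φ, (∑ i, h i) φ⟫_ℂ).re = ∑ i, ‖h i φ‖ ^ 2 := by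
    rw [← re_to_complex]
    simp only [_root_.sum_apply, inner_sum, map_sum, (hh _).re_inner_apply_self]
  have hφ : prodOneSub h l ψ = φ := hφdef.symm
  have hbound := sum_norm_sq_apply_prodOneSub_apply_le hh hdeg hl hlmem ψ
  have hle := norm_prodOneSub_apply_le hh l ψ
  rw [hφ, hψ, one_pow] at hbound
  rw [hφ, hψ] at hle
  rw [hε, henergy]
  exact le_one_div_div_div_add_one (by positivity) (pow_le_one₀ (norm_nonneg _) hle)
    (by positivity) (by positivity) hbound

/-- **The detectability lemma.** -/
theorem detectability_lemma
    {E : Type*} [NormedAddCommGroup E] [InnerProductSpace ℂ E] [FiniteDimensional ℂ E]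
    {m : ℕ} (h : Fin m → (E →L[ℂ] E))
    (hproj : ∀ i, IsSelfAdjoint (h i) ∧ (h i).comp (h i) = h i)
    (g : ℕ)
    (hcomm : ∀ i, (Finset.univ.filter fun j => j ≠ i ∧ ¬ Commute (h i) (h j)).card ≤ g)
    (l : List (Fin m)) (hl : l.Nodup) (hlmem : ∀ i, i ∈ l)
    (ψ : E) (hψ : ‖ψ‖ = 1)
    (φ : E) (hφdef : φ = ((l.map fun i => (1 : E →L[ℂ] E) - h i).prod) ψ)
    (hφ : φ ≠ 0)
    (εφ : ℝ) (hε : εφ = (⟪φ, (∑ i, h i) φ⟫_ℂ).re / ‖φ‖ ^ 2) :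
    ‖φ‖ ^ 2 ≤ 1 / (εφ / (g : ℝ) ^ 2 + 1) :=
  detectability_lemma_general h hproj g hcomm l hl hlmem ψ hψ φ hφdef εφ hε
end
end

section
/- Let H = ∑_{i=1}^{n-1} h_i be a sum of orthogonal projections such that h_i and h_j commute whenever |i - j| ≥ 2, and define DL(H) = (∏_i (1 - h_{2i})) · (∏_i (1 - h_{2i+1})). Then for any eigenvector ψ of H (with eigenvalue ε'), ‖DL(H) ψ‖² ≥ 1 - 4ε', where ε' = ⟨ψ, Hψ⟩. -/
/-!
Split `H` into its even and odd layers. Within a layer the terms commute, so `P = ∏ (1 - h_{2i})`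
and `Q = ∏ (1 - h_{2i+1})` are projections, and a union bound over the layer gives
`‖ψ - P ψ‖² ≤ ε_even := ∑ ‖h_{2i} ψ‖²` (likewise for `Q`), where `ε_even + ε_odd = ⟪ψ, H ψ⟫ = ε'`.
Pythagoras for `P` and `Q` together with `Q ψ - P Q ψ = (1 - P) ψ - (1 - P) (ψ - Q ψ)` then give
`‖P Q ψ‖² ≥ 1 - 2 ε_even - 3 ε_odd ≥ 1 - 4 ε'`.
-/

open scoped InnerProductSpace

theorem Commute.one_sub_one_sub {R : Type*} [Ring R] {a b : R} (h : Commute a b) :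
    Commute (1 - a) (1 - b) :=
  (Commute.one_right _).sub_right ((Commute.one_left _).sub_left h)

theorem IsStarProjection.list_prod_map {R ι : Type*} [Semiring R] [StarRing R] {l : List ι}
    {p : ι → R} (hp : ∀ i ∈ l, IsStarProjection (p i))
    (hc : l.Pairwise fun i j => Commute (p i) (p j)) : IsStarProjection (l.map p).prod := by
  induction l with
  | nil => exact IsStarProjection.one _
  | cons a l ih =>
    rw [List.pairwise_cons] at hc
    rw [List.forall_mem_cons] at hp
    exact hp.1.mul (ih hp.2 hc.2) (Commute.list_prod_right _ _ (List.forall_mem_map.mpr hc.1))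

namespace IsStarProjection

variable {𝕜 E : Type*} [RCLike 𝕜] [NormedAddCommGroup E] [InnerProductSpace 𝕜 E] [CompleteSpace E]
  {T : E →L[𝕜] E}

theorem re_inner_apply_eq_norm_sq (hT : IsStarProjection T) (x : E) :
    RCLike.re ⟪x, T x⟫_𝕜 = ‖T x‖ ^ 2 := by
  have hTT : T (T x) = T x := congr($(hT.isIdempotentElem) x)
  have hsymm := ContinuousLinearMap.isSelfAdjoint_iff_isSymmetric.mp hT.isSelfAdjoint
  have hinner : ⟪x, T x⟫_𝕜 = ⟪T x, T x⟫_𝕜 := by simpa [hTT] using (hsymm x (T x)).symm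
  rw [hinner, inner_self_eq_norm_sq]

theorem norm_sub_apply_sq (hT : IsStarProjection T) (x : E) :
    ‖x - T x‖ ^ 2 = ‖x‖ ^ 2 - ‖T x‖ ^ 2 := by
  rw [norm_sub_sq (𝕜 := 𝕜), hT.re_inner_apply_eq_norm_sq]
  ring

theorem norm_apply_le_s15 (hT : IsStarProjection T) (x : E) : ‖T x‖ ≤ ‖x‖ := by
  simpa using T.le_of_opNorm_le hT.norm_le x

theorem norm_sq_sub_le_norm_apply_apply_sq {P Q : E →L[𝕜] E}
    (hP : IsStarProjection P) (hQ : IsStarProjection Q) (x : E) :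
    ‖x‖ ^ 2 - 2 * ‖x - P x‖ ^ 2 - 3 * ‖x - Q x‖ ^ 2 ≤ ‖P (Q x)‖ ^ 2 := by
  have hsplit : Q x - P (Q x) = (x - P x) - (1 - P) (x - Q x) := by
    simp only [sub_apply, one_apply_eq_self, map_sub]
    abel
  have htri : ‖Q x - P (Q x)‖ ≤ ‖x - P x‖ + ‖x - Q x‖ :=
    hsplit ▸ (norm_sub_le _ _).trans (add_le_add_right (hP.one_sub.norm_apply_le_s15 _) _)
  have hPQ := hP.norm_sub_apply_sq (Q x)
  have hQ := hQ.norm_sub_apply_sq x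
  nlinarith [norm_nonneg (Q x - P (Q x)), sq_nonneg (‖x - P x‖ - ‖x - Q x‖)]

end IsStarProjection

/-- Union bound: each factor `1 - h a` costs at most `‖h a x‖²` of squared norm, since `h a`
commutes with the remaining product, a contraction. -/
theorem norm_sq_le_norm_prod_one_sub_apply_sq_add_sum {𝕜 E ι : Type*} [RCLike 𝕜]
    [NormedAddCommGroup E] [InnerProductSpace 𝕜 E] [CompleteSpace E] {l : List ι}
    {h : ι → E →L[𝕜] E} (hh : ∀ i ∈ l, IsStarProjection (h i))
    (hc : l.Pairwise fun i j => Commute (h i) (h j)) (x : E) :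
    ‖x‖ ^ 2 ≤ ‖(l.map fun i => 1 - h i).prod x‖ ^ 2 + (l.map fun i => ‖h i x‖ ^ 2).sum := by
  induction l with
  | nil => simp
  | cons a l ih =>
    rw [List.pairwise_cons] at hc
    rw [List.forall_mem_cons] at hh
    set P : E →L[𝕜] E := (l.map fun i => 1 - h i).prod
    have hP : IsStarProjection P :=
      IsStarProjection.list_prod_map (fun i hi => (hh.2 i hi).one_sub)
        (hc.2.imp Commute.one_sub_one_sub)
    have haP : Commute (h a) P :=
      Commute.list_prod_right _ _ (List.forall_mem_map.mpr fun i hi =>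
        (Commute.one_right _).sub_right (hc.1 i hi))
    have hcontr : ‖h a (P x)‖ ≤ ‖h a x‖ := by
      rw [← mul_apply_eq_comp, haP.eq, mul_apply_eq_comp]
      exact hP.norm_apply_le_s15 _
    have hpyth := hh.1.norm_sub_apply_sq (P x)
    have hrest := ih hh.2 hc.2
    simp only [List.map_cons, List.prod_cons, List.sum_cons, mul_apply_eq_comp,
      sub_apply, one_apply_eq_self]
    nlinarith [norm_nonneg (h a (P x))]

theorem pairwise_commute_filter_mod_two {M : Type*} [Monoid M] {n : ℕ} {h : Fin n → M}
    (hcomm : ∀ i j : Fin n, (i.val + 2 ≤ j.val ∨ j.val + 2 ≤ i.val) → Commute (h i) (h j))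
    (r : ℕ) :
    ((List.finRange n).filter fun i => i.val % 2 = r).Pairwise fun i j => Commute (h i) (h j) := by
  refine List.pairwise_filter.mpr ((List.pairwise_lt_finRange n).imp fun {i j} hij hi hj => ?_)
  have : i.val < j.val := hij
  simp only [decide_eq_true_eq] at hi hj
  exact hcomm i j (Or.inl (by omega))

theorem re_inner_sum_apply_eq_sum_norm_sq {𝕜 E ι : Type*} [RCLike 𝕜] [NormedAddCommGroup E]
    [InnerProductSpace 𝕜 E] [CompleteSpace E] {s : Finset ι} {h : ι → E →L[𝕜] E}
    (hh : ∀ i ∈ s, IsStarProjection (h i)) (x : E) :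
    RCLike.re ⟪x, (∑ i ∈ s, h i) x⟫_𝕜 = ∑ i ∈ s, ‖h i x‖ ^ 2 := by
  rw [sum_apply, inner_sum, map_sum]
  exact Finset.sum_congr rfl fun i hi => (hh i hi).re_inner_apply_eq_norm_sq x

theorem Fin.sum_univ_eq_sum_filter_even_add_sum_filter_odd {M : Type*} [AddCommMonoid M] {n : ℕ}
    (f : Fin n → M) :
    ∑ i, f i = (((List.finRange n).filter fun i => i.val % 2 = 0).map f).sum +
      (((List.finRange n).filter fun i => i.val % 2 = 1).map f).sum := by
  rw [Fin.sum_univ_def,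
    ← List.sum_map_filter_add_sum_map_filter_not (fun i : Fin n => i.val % 2 = 0)]
  simp only [Nat.mod_two_ne_zero]

theorem detectability_lemma_converse_general
    {E : Type*} [NormedAddCommGroup E] [InnerProductSpace ℂ E] [FiniteDimensional ℂ E]
    {n : ℕ} (h : Fin n → (E →L[ℂ] E))
    (hproj : ∀ i, IsSelfAdjoint (h i) ∧ (h i).comp (h i) = h i)
    (hcomm : ∀ i j : Fin n, (i.val + 2 ≤ j.val ∨ j.val + 2 ≤ i.val) → Commute (h i) (h j))
    (DL : E →L[ℂ] E)
    (hDL : DL = ((((List.finRange n).filter fun i => i.val % 2 = 0).map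
          fun i => (1 : E →L[ℂ] E) - h i).prod) *
        ((((List.finRange n).filter fun i => i.val % 2 = 1).map
          fun i => (1 : E →L[ℂ] E) - h i).prod))
    (ψ : E) (hψ : ‖ψ‖ = 1)
    (ε' : ℝ) (hε : ε' = (⟪ψ, (∑ i, h i) ψ⟫_ℂ).re) :
    1 - 4 * ε' ≤ ‖DL ψ‖ ^ 2 := by
  have hh : ∀ i, IsStarProjection (h i) := fun i => ⟨(hproj i).2, (hproj i).1⟩
  have hlayer r := IsStarProjection.list_prod_map (fun i _ => (hh i).one_sub)
    ((pairwise_commute_filter_mod_two hcomm r).imp Commute.one_sub_one_sub)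
  have hbound r := norm_sq_le_norm_prod_one_sub_apply_sq_add_sum (fun i _ => hh i)
    (pairwise_commute_filter_mod_two hcomm r) ψ
  have hnonneg r :
      0 ≤ (((List.finRange n).filter fun i => i.val % 2 = r).map fun i => ‖h i ψ‖ ^ 2).sum :=
    List.sum_nonneg (by simp)
  have htwo := (hlayer 0).norm_sq_sub_le_norm_apply_apply_sq (hlayer 1) ψ
  rw [(hlayer 0).norm_sub_apply_sq, (hlayer 1).norm_sub_apply_sq] at htwo
  rw [hDL, mul_apply_eq_comp, hε, ← RCLike.re_to_complex,
    re_inner_sum_apply_eq_sum_norm_sq (fun i _ => hh i),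
    Fin.sum_univ_eq_sum_filter_even_add_sum_filter_odd]
  simp only [hψ, one_pow] at htwo hbound
  linarith [hbound 0, hbound 1, hnonneg 0, hnonneg 1]

/-- **Converse of the detectability lemma in 1D.** -/
theorem detectability_lemma_converse
    {E : Type*} [NormedAddCommGroup E] [InnerProductSpace ℂ E] [FiniteDimensional ℂ E]
    {n : ℕ} (h : Fin n → (E →L[ℂ] E))
    (hproj : ∀ i, IsSelfAdjoint (h i) ∧ (h i).comp (h i) = h i)
    (hcomm : ∀ i j : Fin n, (i.val + 2 ≤ j.val ∨ j.val + 2 ≤ i.val) → Commute (h i) (h j))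
    (DL : E →L[ℂ] E)
    (hDL : DL = ((((List.finRange n).filter fun i => i.val % 2 = 0).map
          fun i => (1 : E →L[ℂ] E) - h i).prod) *
        ((((List.finRange n).filter fun i => i.val % 2 = 1).map
          fun i => (1 : E →L[ℂ] E) - h i).prod))
    (ψ : E) (hψ : ‖ψ‖ = 1) (μ : ℂ) (heig : (∑ i, h i) ψ = μ • ψ)
    (ε' : ℝ) (hε : ε' = (⟪ψ, (∑ i, h i) ψ⟫_ℂ).re) :
    1 - 4 * ε' ≤ ‖DL ψ‖ ^ 2 :=
  detectability_lemma_converse_general h hproj hcomm DL hDL ψ hψ ε' hε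
end

section
/- Let K be a positive semidefinite operator and T an invariant subspace of K on which all eigenvalues of K are ≥ 1, and suppose ‖K v⊥‖² ≤ Δ for every unit vector v⊥ orthogonal to T in a K-invariant complement. Let u = α v + √(1-α²) v⊥ with v ∈ T, v⊥ ⊥ T unit vectors in the respective K-invariant subspaces and α ≥ 1-δ > 0. Then |⟨K u/‖K u‖, K v/‖K v‖⟩|² ≥ 1 - Δ/(1-δ)². -/
/-!
Since `K` preserves `T` and `Tᗮ`, the vectors `K v` and `K w` are orthogonal, so
`K u = α K v + √(1 - α²) K w` is an orthogonal decomposition and the squared overlap of `K u`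
with `K v` is `A / (A + B)`, where `A = ‖α K v‖²` and `B = ‖√(1 - α²) K w‖²`. The bound
`‖x‖² ≤ re ⟪x, K x⟫` on `T` gives `‖K v‖ ≥ 1`, hence `A ≥ (1 - δ)²`, while `B ≤ Δ`; so
`1 - A / (A + B) = B / (A + B) ≤ Δ / (1 - δ)²`.
-/

open scoped InnerProductSpace

section InnerProductSpace

variable {𝕜 E : Type*} [RCLike 𝕜] [NormedAddCommGroup E] [InnerProductSpace 𝕜 E]

theorem norm_inner_smul_inv_norm_sq (x y : E) :
    ‖⟪((‖x‖⁻¹ : ℝ) : 𝕜) • x, ((‖y‖⁻¹ : ℝ) : 𝕜) • y⟫_𝕜‖ ^ 2 =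
      ‖⟪x, y⟫_𝕜‖ ^ 2 / (‖x‖ ^ 2 * ‖y‖ ^ 2) := by
  rw [inner_smul_left, inner_smul_right, norm_mul, norm_mul, RCLike.norm_conj,
    RCLike.norm_ofReal, RCLike.norm_ofReal, abs_inv, abs_inv, abs_norm, abs_norm]
  field_simp

theorem norm_inner_smul_add_smul_sq_of_inner_eq_zero {a b : E} (hab : ⟪a, b⟫_𝕜 = 0) (α β : 𝕜) :
    ‖⟪α • a + β • b, a⟫_𝕜‖ ^ 2 = ‖α • a‖ ^ 2 * ‖a‖ ^ 2 := by
  have hba : ⟪b, a⟫_𝕜 = 0 := inner_eq_zero_symm.mp hab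
  rw [inner_add_left, inner_smul_left, inner_smul_left, hba, inner_self_eq_norm_sq_to_K,
    mul_zero, add_zero, norm_mul, RCLike.norm_conj, norm_pow, RCLike.norm_ofReal, abs_norm,
    norm_smul]
  ring

theorem norm_smul_add_smul_sq_of_inner_eq_zero {a b : E} (hab : ⟪a, b⟫_𝕜 = 0) (α β : 𝕜) :
    ‖α • a + β • b‖ ^ 2 = ‖α • a‖ ^ 2 + ‖β • b‖ ^ 2 := by
  have h : ⟪α • a, β • b⟫_𝕜 = 0 := by rw [inner_smul_left, inner_smul_right, hab]; ring
  simpa only [sq] using norm_add_sq_eq_norm_sq_add_norm_sq_of_inner_eq_zero _ _ h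

theorem norm_inner_normalize_smul_add_smul_sq {a b : E} (hab : ⟪a, b⟫_𝕜 = 0) (α β : 𝕜) :
    ‖⟪((‖α • a + β • b‖⁻¹ : ℝ) : 𝕜) • (α • a + β • b), ((‖a‖⁻¹ : ℝ) : 𝕜) • a⟫_𝕜‖ ^ 2 =
      ‖α • a‖ ^ 2 / (‖α • a‖ ^ 2 + ‖β • b‖ ^ 2) := by
  rw [norm_inner_smul_inv_norm_sq, norm_inner_smul_add_smul_sq_of_inner_eq_zero hab,
    norm_smul_add_smul_sq_of_inner_eq_zero hab]
  rcases eq_or_ne a 0 with rfl | ha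
  · simp
  · have : ‖a‖ ^ 2 ≠ 0 := by positivity
    rw [mul_div_mul_right _ _ this]

theorem norm_le_norm_apply_of_sq_le_re_inner (f : E → E) {x : E}
    (hx : ‖x‖ ^ 2 ≤ RCLike.re ⟪x, f x⟫_𝕜) : ‖x‖ ≤ ‖f x‖ := by
  rcases (norm_nonneg x).eq_or_lt with h | h
  · rw [← h]; exact norm_nonneg _
  · have := hx.trans (re_inner_le_norm x (f x))
    nlinarith

end InnerProductSpace

theorem one_sub_div_le_div_add {A B Δ c : ℝ} (hc : 0 < c) (hA : c ≤ A) (hB : 0 ≤ B)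
    (hBΔ : B ≤ Δ) : 1 - Δ / c ≤ A / (A + B) := by
  have hAB : 0 < A + B := by linarith
  have key : B / (A + B) ≤ Δ / c := div_le_div₀ (hB.trans hBΔ) hBΔ hc (by linarith)
  have : A / (A + B) = 1 - B / (A + B) := by field_simp; ring
  linarith

theorem error_reduction_overlap_general
    {E : Type*} [NormedAddCommGroup E] [InnerProductSpace ℂ E]
    (K : E →L[ℂ] E)
    (T : Submodule ℂ E)
    (hTinv : ∀ x ∈ T, K x ∈ T) (hTperpinv : ∀ x ∈ Tᗮ, K x ∈ Tᗮ)
    (hKT : ∀ x ∈ T, ‖x‖ ^ 2 ≤ (⟪x, K x⟫_ℂ).re)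
    (Δ : ℝ) (hΔ : ∀ x ∈ Tᗮ, ‖x‖ = 1 → ‖K x‖ ^ 2 ≤ Δ)
    (δ α : ℝ) (hδ : 0 < 1 - δ) (hα : 1 - δ ≤ α)
    (v w u : E) (hv : v ∈ T) (hvnorm : ‖v‖ = 1)
    (hw : w ∈ Tᗮ) (hwnorm : ‖w‖ = 1)
    (hu : u = (α : ℂ) • v + ((Real.sqrt (1 - α ^ 2) : ℝ) : ℂ) • w) :
    1 - Δ / (1 - δ) ^ 2 ≤
      ‖⟪((‖K u‖⁻¹ : ℝ) : ℂ) • K u, ((‖K v‖⁻¹ : ℝ) : ℂ) • K v⟫_ℂ‖ ^ 2 := by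
  set β := Real.sqrt (1 - α ^ 2)
  have hKu : K u = (α : ℂ) • K v + (β : ℂ) • K w := by simp only [hu, map_add, map_smul]
  have horth : ⟪K v, K w⟫_ℂ = 0 :=
    Submodule.inner_right_of_mem_orthogonal (hTinv v hv) (hTperpinv w hw)
  have hKv : 1 ≤ ‖K v‖ := hvnorm ▸ norm_le_norm_apply_of_sq_le_re_inner (𝕜 := ℂ) K (hKT v hv)
  have hA : (1 - δ) ^ 2 ≤ ‖(α : ℂ) • K v‖ ^ 2 := by
    refine pow_le_pow_left₀ hδ.le ?_ 2
    rw [norm_smul, Complex.norm_real, Real.norm_of_nonneg (hδ.le.trans hα)]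
    exact hα.trans (le_mul_of_one_le_right (hδ.le.trans hα) hKv)
  have hB : ‖(β : ℂ) • K w‖ ^ 2 ≤ Δ := by
    have hβ : β ^ 2 ≤ 1 :=
      pow_le_one₀ (Real.sqrt_nonneg _) (Real.sqrt_le_one.mpr (by linarith [sq_nonneg α]))
    rw [norm_smul, Complex.norm_real, Real.norm_eq_abs, mul_pow, sq_abs]
    exact (mul_le_of_le_one_left (sq_nonneg _) hβ).trans (hΔ w hw hwnorm)
  calc 1 - Δ / (1 - δ) ^ 2
      ≤ ‖(α : ℂ) • K v‖ ^ 2 / (‖(α : ℂ) • K v‖ ^ 2 + ‖(β : ℂ) • K w‖ ^ 2) :=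
        one_sub_div_le_div_add (by positivity) hA (by positivity) hB
    _ = _ := by rw [hKu]; exact (norm_inner_normalize_smul_add_smul_sq horth _ _).symm

/-- **Error reduction core computation.** If `K` is positive semidefinite, preserves `T` and
`Tᗮ`, acts with eigenvalues `≥ 1` on `T` and with `‖K v⊥‖² ≤ Δ` on unit vectors of `Tᗮ`,
then for `u = α v + √(1-α²) v⊥` with `v ∈ T`, `v⊥ ∈ Tᗮ` unit vectors and `α ≥ 1-δ > 0`,
the normalized images satisfy `|⟨Ku/‖Ku‖, Kv/‖Kv‖⟩|² ≥ 1 - Δ/(1-δ)²`. -/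
theorem error_reduction_overlap
    {E : Type*} [NormedAddCommGroup E] [InnerProductSpace ℂ E] [FiniteDimensional ℂ E]
    (K : E →L[ℂ] E) (hK : K.IsPositive)
    (T : Submodule ℂ E)
    (hTinv : ∀ x ∈ T, K x ∈ T) (hTperpinv : ∀ x ∈ Tᗮ, K x ∈ Tᗮ)
    (hKT : ∀ x ∈ T, ‖x‖ ^ 2 ≤ (⟪x, K x⟫_ℂ).re)
    (Δ : ℝ) (hΔ : ∀ x ∈ Tᗮ, ‖x‖ = 1 → ‖K x‖ ^ 2 ≤ Δ)
    (δ α : ℝ) (hδ : 0 < 1 - δ) (hα : 1 - δ ≤ α) (hα1 : α ≤ 1)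
    (v w u : E) (hv : v ∈ T) (hvnorm : ‖v‖ = 1)
    (hw : w ∈ Tᗮ) (hwnorm : ‖w‖ = 1)
    (hu : u = (α : ℂ) • v + ((Real.sqrt (1 - α ^ 2) : ℝ) : ℂ) • w) :
    1 - Δ / (1 - δ) ^ 2 ≤
      ‖⟪((‖K u‖⁻¹ : ℝ) : ℂ) • K u, ((‖K v‖⁻¹ : ℝ) : ℂ) • K v⟫_ℂ‖ ^ 2 :=
  error_reduction_overlap_general K T hTinv hTperpinv hKT Δ hΔ δ α hδ hα v w u hv hvnorm hw hwnorm
    hu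
end
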